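/- arXiv:2601.07900 — 7 statements merged into one kernel-verified Lean document; each statement's English description precedes it below -/
import Mathlib

section
/- Projective isometries of the Isbell transforms (discrete real case): (i) for all f, f' : C → ℝ, osc((M^* f) − (M^* f')) ≤ osc(f − f'), and for all g, g' : D → ℝ, osc((M_* g) − (M_* g')) ≤ osc(g − g') (the Isbell transforms are 1-Lipschitz for the oscillation pseudometric); (ii) if moreover M_*(M^* f) = f and M_*(M^* f') = f', then osc((M^* f) − (M^* f')) = osc(f − f') (on fixed points of the closure operator, M^* is an isometry, with inverse isometry M_*). -/
/-- Isbell upper transform: `(M^* f)(d) = min_{c} (M c d - f c)`. -/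
noncomputable def isbellStar {C D : Type*} [Fintype C] [Nonempty C]
    (M : C → D → ℝ) (f : C → ℝ) : D → ℝ :=
  fun d => Finset.univ.inf' Finset.univ_nonempty (fun c => M c d - f c)

/-- Isbell lower transform: `(M_* g)(c) = min_{d} (M c d - g d)`. -/
noncomputable def isbellLow {C D : Type*} [Fintype D] [Nonempty D]
    (M : C → D → ℝ) (g : D → ℝ) : C → ℝ :=
  fun c => Finset.univ.inf' Finset.univ_nonempty (fun d => M c d - g d)

/-- Oscillation (max-spread) of a function on a nonempty finite type. -/
noncomputable def osc {C : Type*} [Fintype C] [Nonempty C] (h : C → ℝ) : ℝ :=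
  Finset.univ.sup' Finset.univ_nonempty h - Finset.univ.inf' Finset.univ_nonempty h

lemma isbell_lip {I X : Type*} [Fintype I] [Nonempty I] [Fintype X] [Nonempty X]
    (A : I → X → ℝ) (f f' : I → ℝ) :
    osc (fun x => (Finset.univ.inf' Finset.univ_nonempty fun i => A i x - f i)
        - (Finset.univ.inf' Finset.univ_nonempty fun i => A i x - f' i))
      ≤ osc (fun i => f i - f' i) := by
  set mI := (Finset.univ (α := I)).inf' Finset.univ_nonempty (fun i => f i - f' i) with hmI
  set MI := (Finset.univ (α := I)).sup' Finset.univ_nonempty (fun i => f i - f' i) with hMI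
  have hub : ∀ x : X,
      (Finset.univ.inf' Finset.univ_nonempty fun i => A i x - f i)
        - (Finset.univ.inf' Finset.univ_nonempty fun i => A i x - f' i) ≤ -mI := by
    intro x
    obtain ⟨c, -, hc⟩ := Finset.exists_mem_eq_inf' (Finset.univ_nonempty (α := I))
      (fun i => A i x - f' i)
    have h1 : (Finset.univ.inf' Finset.univ_nonempty fun i => A i x - f i) ≤ A c x - f c :=
      Finset.inf'_le _ (Finset.mem_univ c)
    have h2 : mI ≤ f c - f' c := Finset.inf'_le _ (Finset.mem_univ c)
    rw [hc]; linarith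
  have hlb : ∀ x : X, -MI ≤
      (Finset.univ.inf' Finset.univ_nonempty fun i => A i x - f i)
        - (Finset.univ.inf' Finset.univ_nonempty fun i => A i x - f' i) := by
    intro x
    obtain ⟨c, -, hc⟩ := Finset.exists_mem_eq_inf' (Finset.univ_nonempty (α := I))
      (fun i => A i x - f i)
    have h1 : (Finset.univ.inf' Finset.univ_nonempty fun i => A i x - f' i) ≤ A c x - f' c :=
      Finset.inf'_le _ (Finset.mem_univ c)
    have h2 : f c - f' c ≤ MI := Finset.le_sup' (fun i => f i - f' i) (Finset.mem_univ c)
    rw [hc]; linarith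
  unfold osc
  have hsup : Finset.univ.sup' Finset.univ_nonempty
      (fun x => (Finset.univ.inf' Finset.univ_nonempty fun i => A i x - f i)
        - (Finset.univ.inf' Finset.univ_nonempty fun i => A i x - f' i)) ≤ -mI :=
    Finset.sup'_le _ _ (fun x _ => hub x)
  have hinf : -MI ≤ Finset.univ.inf' Finset.univ_nonempty
      (fun x => (Finset.univ.inf' Finset.univ_nonempty fun i => A i x - f i)
        - (Finset.univ.inf' Finset.univ_nonempty fun i => A i x - f' i)) :=
    Finset.le_inf' _ _ (fun x _ => hlb x)
  linarith

/-- Projective isometries of the Isbell transforms (discrete real case):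
the transforms are 1-Lipschitz for the oscillation pseudometric, and `M^*`
is an isometry on fixed points of the closure operator. -/
theorem isbell_projective_isometries {C D : Type*} [Fintype C] [Nonempty C]
    [Fintype D] [Nonempty D] (M : C → D → ℝ) :
    (∀ f f' : C → ℝ,
        osc (fun d => isbellStar M f d - isbellStar M f' d) ≤ osc (fun c => f c - f' c)) ∧
    (∀ g g' : D → ℝ,
        osc (fun c => isbellLow M g c - isbellLow M g' c) ≤ osc (fun d => g d - g' d)) ∧
    (∀ f f' : C → ℝ, isbellLow M (isbellStar M f) = f → isbellLow M (isbellStar M f') = f' →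
        osc (fun d => isbellStar M f d - isbellStar M f' d) = osc (fun c => f c - f' c)) := by
  have hstar : ∀ f f' : C → ℝ,
      osc (fun d => isbellStar M f d - isbellStar M f' d) ≤ osc (fun c => f c - f' c) :=
    fun f f' => isbell_lip M f f'
  have hlow : ∀ g g' : D → ℝ,
      osc (fun c => isbellLow M g c - isbellLow M g' c) ≤ osc (fun d => g d - g' d) :=
    fun g g' => isbell_lip (fun d c => M c d) g g'
  refine ⟨hstar, hlow, fun f f' hf hf' => le_antisymm (hstar f f') ?_⟩
  have := hlow (isbellStar M f) (isbellStar M f')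
  rw [hf, hf'] at this
  exact this
end

section
/- Anchor description of the fixed-point locus: a function f : C → ℝ satisfies M_*(M^* f) = f if and only if there exist weights λ : D → ℝ such that f(c) = min_{d ∈ D} (M(c,d) − λ(d)) for all c ∈ C; in particular each anchor A_d = M(−,d) (the d-th column of M) is a fixed point of M_* ∘ M^*, and every fixed point is a pointwise minimum of translated anchors. -/
lemma low_star_ge {C D : Type*} [Fintype C] [Nonempty C] [Fintype D] [Nonempty D]
    (M : C → D → ℝ) (f : C → ℝ) (c : C) :
    f c ≤ isbellLow M (isbellStar M f) c := by
  apply Finset.le_inf'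
  intro d _
  have h : isbellStar M f d ≤ M c d - f c :=
    Finset.inf'_le _ (Finset.mem_univ c)
  linarith

lemma star_low_ge {C D : Type*} [Fintype C] [Nonempty C] [Fintype D] [Nonempty D]
    (M : C → D → ℝ) (g : D → ℝ) (d : D) :
    g d ≤ isbellStar M (isbellLow M g) d := by
  apply Finset.le_inf'
  intro c _
  have h : isbellLow M g c ≤ M c d - g d :=
    Finset.inf'_le _ (Finset.mem_univ d)
  linarith

lemma low_antitone {C D : Type*} [Fintype D] [Nonempty D]
    (M : C → D → ℝ) {g g' : D → ℝ} (h : ∀ d, g d ≤ g' d) (c : C) :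
    isbellLow M g' c ≤ isbellLow M g c := by
  apply Finset.le_inf'
  intro d _
  calc isbellLow M g' c ≤ M c d - g' d := Finset.inf'_le _ (Finset.mem_univ d)
    _ ≤ M c d - g d := by linarith [h d]

lemma low_star_low {C D : Type*} [Fintype C] [Nonempty C] [Fintype D] [Nonempty D]
    (M : C → D → ℝ) (g : D → ℝ) :
    isbellLow M (isbellStar M (isbellLow M g)) = isbellLow M g := by
  funext c
  exact le_antisymm (low_antitone M (star_low_ge M g) c) (low_star_ge M (isbellLow M g) c)

/-- Anchor description of the fixed-point locus: `f` is a fixed point of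
`M_* ∘ M^*` iff it is a pointwise minimum of translated anchors; in particular
each anchor (column of `M`) is a fixed point. -/
theorem anchor_description {C D : Type*} [Fintype C] [Nonempty C]
    [Fintype D] [Nonempty D] (M : C → D → ℝ) :
    (∀ f : C → ℝ,
      isbellLow M (isbellStar M f) = f ↔
        ∃ lam : D → ℝ, ∀ c,
          f c = Finset.univ.inf' Finset.univ_nonempty (fun d => M c d - lam d)) ∧
    (∀ d₀ : D,
      isbellLow M (isbellStar M (fun c => M c d₀)) = (fun c => M c d₀)) := by
  constructor
  · intro f
    constructor
    · intro hf
      exact ⟨isbellStar M f, fun c => (congrFun hf c).symm⟩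
    · rintro ⟨lam, hlam⟩
      have hf : f = isbellLow M lam := funext fun c => hlam c
      rw [hf]
      exact low_star_low M lam
  · intro d₀
    funext c
    refine le_antisymm ?_ (low_star_ge M (fun c => M c d₀) c)
    have h0 : isbellStar M (fun c => M c d₀) d₀ = 0 := by
      refine le_antisymm ?_ ?_
      · exact le_trans (Finset.inf'_le (fun c => M c d₀ - M c d₀)
          (Finset.mem_univ (Classical.arbitrary C))) (le_of_eq (sub_self _))
      · apply Finset.le_inf'
        intro c' _
        simp
    calc isbellLow M (isbellStar M (fun c => M c d₀)) c
        ≤ M c d₀ - isbellStar M (fun c => M c d₀) d₀ :=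
          Finset.inf'_le _ (Finset.mem_univ d₀)
      _ = M c d₀ := by rw [h0]; ring
end

section
/- Oscillation bound for images of the Isbell transform (norm of M): for every g : D → ℝ, the oscillation of M_* g is bounded by the largest oscillation of a column of M: osc(M_* g) ≤ max_{d ∈ D} osc(c ↦ M(c,d)). -/
/-- Oscillation bound for images of the Isbell transform: the oscillation of
`M_* g` is bounded by the largest oscillation of a column of `M`. -/
theorem osc_isbellLow_le {C D : Type*} [Fintype C] [Nonempty C]
    [Fintype D] [Nonempty D] (M : C → D → ℝ) (g : D → ℝ) :
    osc (isbellLow M g) ≤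
      Finset.univ.sup' Finset.univ_nonempty (fun d => osc (fun c => M c d)) := by
  set B := Finset.univ.sup' Finset.univ_nonempty (fun d => osc (fun c => M c d)) with hB
  have key : ∀ c c' : C, isbellLow M g c - isbellLow M g c' ≤ B := by
    intro c c'
    obtain ⟨d', -, hd'⟩ := Finset.exists_mem_eq_inf' (Finset.univ_nonempty (α := D))
      (fun d => M c' d - g d)
    have h1 : isbellLow M g c ≤ M c d' - g d' :=
      Finset.inf'_le _ (Finset.mem_univ d')
    have h2 : isbellLow M g c' = M c' d' - g d' := hd'
    have h3 : M c d' - M c' d' ≤ osc (fun c => M c d') := by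
      have hu : M c d' ≤ Finset.univ.sup' Finset.univ_nonempty (fun c => M c d') :=
        Finset.le_sup' (fun c => M c d') (Finset.mem_univ c)
      have hl : Finset.univ.inf' Finset.univ_nonempty (fun c => M c d') ≤ M c' d' :=
        Finset.inf'_le _ (Finset.mem_univ c')
      unfold osc; linarith
    have h4 : osc (fun c => M c d') ≤ B :=
      hB ▸ Finset.le_sup' (fun d => osc (fun c => M c d)) (Finset.mem_univ d')
    linarith
  unfold osc
  rw [sub_le_iff_le_add]
  apply Finset.sup'_le
  intro c _
  obtain ⟨c', -, hc'⟩ := Finset.exists_mem_eq_inf' (Finset.univ_nonempty (α := C))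
    (isbellLow M g)
  rw [hc']
  have := key c c'
  linarith
end

section
/- Compactness of the projective nucleus (discrete real case): fix c₀ ∈ C; the gauge slice of the fixed-point locus, namely the set { f : C → ℝ | f(c₀) = 0 and M_*(M^* f) = f }, is a compact subset of the space C → ℝ (with the product topology on ℝ^C). -/
/-!
If `f = M_* (M^* f)` and `g = M^* f`, then `g d ≤ M c₀ d - f c₀` for every `d`, and the minimum
defining `f c₀ = M_* g c₀` is attained at some `d₂` where `g d₂ = M c₀ d₂ - f c₀`. Reading
`f c = M_* g c` against these two facts pins `f c - f c₀` between the minimum and the maximum of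
`M c d - M c₀ d` over `d`. So the gauge slice lies in a product of compact intervals, and it is
closed because both Isbell transforms are continuous.
-/

section Isbell

variable {C D : Type*}

theorem isbellStar_le [Fintype C] [Nonempty C] (M : C → D → ℝ) (f : C → ℝ) (c : C) (d : D) :
    isbellStar M f d ≤ M c d - f c :=
  Finset.inf'_le (fun c => M c d - f c) (Finset.mem_univ c)

theorem isbellLow_le [Fintype D] [Nonempty D] (M : C → D → ℝ) (g : D → ℝ) (c : C) (d : D) :
    isbellLow M g c ≤ M c d - g d :=
  Finset.inf'_le (fun d => M c d - g d) (Finset.mem_univ d)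

theorem exists_isbellLow_eq [Fintype D] [Nonempty D] (M : C → D → ℝ) (g : D → ℝ) (c : C) :
    ∃ d, isbellLow M g c = M c d - g d := by
  obtain ⟨d, -, hd⟩ := Finset.exists_mem_eq_inf' Finset.univ_nonempty (fun d => M c d - g d)
  exact ⟨d, hd⟩

theorem continuous_isbellStar [Fintype C] [Nonempty C] (M : C → D → ℝ) :
    Continuous (isbellStar M) :=
  continuous_pi fun _ => Continuous.finset_inf'_apply _ fun c _ =>
    continuous_const.sub (continuous_apply c)

theorem continuous_isbellLow [Fintype D] [Nonempty D] (M : C → D → ℝ) :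
    Continuous (isbellLow M) :=
  continuous_pi fun _ => Continuous.finset_inf'_apply _ fun d _ =>
    continuous_const.sub (continuous_apply d)

variable [Fintype C] [Nonempty C] [Fintype D] [Nonempty D]

theorem isClosed_setOf_isbellLow_isbellStar_eq (M : C → D → ℝ) :
    IsClosed {f : C → ℝ | isbellLow M (isbellStar M f) = f} :=
  isClosed_eq ((continuous_isbellLow M).comp (continuous_isbellStar M)) continuous_id

theorem inf'_le_sub_of_isbellLow_isbellStar_eq {M : C → D → ℝ} {f : C → ℝ}
    (hf : isbellLow M (isbellStar M f) = f) (c c₀ : C) :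
    Finset.univ.inf' Finset.univ_nonempty (fun d => M c d - M c₀ d) ≤ f c - f c₀ := by
  obtain ⟨d, hd⟩ := exists_isbellLow_eq M (isbellStar M f) c
  have hc₀ : isbellStar M f d ≤ M c₀ d - f c₀ := isbellStar_le M f c₀ d
  rw [hf] at hd
  have := Finset.inf'_le (fun d => M c d - M c₀ d) (Finset.mem_univ d)
  linarith

theorem sub_le_sup'_of_isbellLow_isbellStar_eq {M : C → D → ℝ} {f : C → ℝ}
    (hf : isbellLow M (isbellStar M f) = f) (c c₀ : C) :
    f c - f c₀ ≤ Finset.univ.sup' Finset.univ_nonempty (fun d => M c d - M c₀ d) := by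
  obtain ⟨d, hd⟩ := exists_isbellLow_eq M (isbellStar M f) c₀
  have hc : isbellLow M (isbellStar M f) c ≤ M c d - isbellStar M f d := isbellLow_le M _ c d
  have hc₀ : isbellStar M f d ≤ M c₀ d - f c₀ := isbellStar_le M f c₀ d
  rw [hf] at hd hc
  have := Finset.le_sup' (fun d => M c d - M c₀ d) (Finset.mem_univ d)
  linarith

end Isbell

/-- Compactness of the projective nucleus (discrete real case): the gauge
slice of the fixed-point locus is compact in `C → ℝ` with the product topology. -/
theorem gauge_slice_compact {C D : Type*} [Fintype C] [Nonempty C]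
    [Fintype D] [Nonempty D] (M : C → D → ℝ) (c₀ : C) :
    IsCompact {f : C → ℝ | f c₀ = 0 ∧ isbellLow M (isbellStar M f) = f} := by
  have hbox : IsCompact (Set.univ.pi fun c =>
      Set.Icc (Finset.univ.inf' Finset.univ_nonempty (fun d => M c d - M c₀ d))
        (Finset.univ.sup' Finset.univ_nonempty (fun d => M c d - M c₀ d))) :=
    isCompact_univ_pi fun _ => isCompact_Icc
  refine hbox.of_isClosed_subset
    ((isClosed_eq (continuous_apply c₀) continuous_const).inter
      (isClosed_setOf_isbellLow_isbellStar_eq M)) ?_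
  rintro f ⟨hf₀, hf⟩ c -
  have hlow := inf'_le_sub_of_isbellLow_isbellStar_eq hf c c₀
  have hup := sub_le_sup'_of_isbellLow_isbellStar_eq hf c c₀
  rw [hf₀, sub_zero] at hlow hup
  exact ⟨hlow, hup⟩
end

section
/- Full-dimensional witness cells come from permutations: let C be a nonempty finite type with n = card C, let M : C → C → ℝ, fix c₀ ∈ C, and for Y ⊆ C × C let Cell(Y) = { (f,g) : (C → ℝ) × (C → ℝ) | f(c₀) = 0, f(c) + g(d) ≤ M(c,d) for all (c,d), and f(c) + g(d) = M(c,d) for all (c,d) ∈ Y }. Suppose Y covers both coordinates (every c appears as a first coordinate of some element of Y and every d as a second coordinate). If the affine dimension of Cell(Y) is n − 1 (i.e., the rank over ℝ of the vector span of differences of points of Cell(Y) equals n − 1), then Y is the graph of a permutation: there exists a bijection σ : C ≃ C with Y = { (c, σ(c)) | c ∈ C }. In particular, if Y contains two pairs (c,d) and (c',d) with c ≠ c', then the affine relation f(c') − f(c) = M(c',d) − M(c,d) holds throughout Cell(Y), so Cell(Y) cannot have dimension n − 1. -/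
/-- The witness polyhedron `Cell(Y)` in the gauge slice `f c₀ = 0`. -/
def isbellCell {C : Type*} (M : C → C → ℝ) (c₀ : C) (Y : Set (C × C)) :
    Set ((C → ℝ) × (C → ℝ)) :=
  {p | p.1 c₀ = 0 ∧ (∀ c d, p.1 c + p.2 d ≤ M c d) ∧
       (∀ q ∈ Y, p.1 q.1 + p.2 q.2 = M q.1 q.2)}

/-- The linear constraint submodule containing all differences of cell points. -/
def isbellV {C : Type*} (c₀ : C) (Y : Set (C × C)) :
    Submodule ℝ ((C → ℝ) × (C → ℝ)) where
  carrier := {x | x.1 c₀ = 0 ∧ ∀ q ∈ Y, x.1 q.1 + x.2 q.2 = 0}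
  add_mem' := by
    rintro a b ⟨ha0, ha⟩ ⟨hb0, hb⟩
    refine ⟨by simp [ha0, hb0], fun q hq => ?_⟩
    have h1 := ha q hq; have h2 := hb q hq
    simp only [Prod.fst_add, Prod.snd_add, Pi.add_apply]
    linarith
  zero_mem' := by simp
  smul_mem' := by
    rintro r a ⟨ha0, ha⟩
    refine ⟨by simp [ha0], fun q hq => ?_⟩
    have h1 := ha q hq
    simp only [Prod.smul_fst, Prod.smul_snd, Pi.smul_apply, smul_eq_mul]
    rw [← mul_add, h1, mul_zero]
  
lemma isbell_span_le {C : Type*} (M : C → C → ℝ) (c₀ : C) (Y : Set (C × C)) :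
    Submodule.span ℝ
      {x : (C → ℝ) × (C → ℝ) |
        ∃ p ∈ isbellCell M c₀ Y, ∃ q ∈ isbellCell M c₀ Y, x = p - q}
      ≤ isbellV c₀ Y := by
  rw [Submodule.span_le]
  rintro x ⟨p, ⟨hp0, _, hpY⟩, q, ⟨hq0, _, hqY⟩, rfl⟩
  constructor
  · simp [hp0, hq0]
  · intro e he
    have h1 := hpY e he; have h2 := hqY e he
    simp only [Prod.fst_sub, Prod.snd_sub, Pi.sub_apply]
    linarith

/-- Case A: two distinct first coordinates share a second coordinate. -/
lemma isbell_caseA' {C : Type*} [Fintype C] (M : C → C → ℝ) (c₀ : C) (Y : Set (C × C))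
    (hcovD : ∀ d : C, ∃ c : C, (c, d) ∈ Y)
    (hdim : Module.finrank ℝ
        (Submodule.span ℝ
          {x : (C → ℝ) × (C → ℝ) |
            ∃ p ∈ isbellCell M c₀ Y, ∃ q ∈ isbellCell M c₀ Y, x = p - q})
      = Fintype.card C - 1)
    {c c' d : C} (hc : (c, d) ∈ Y) (hc' : (c', d) ∈ Y) (hne : c ≠ c')
    (hc'0 : c' ≠ c₀) : False := by
  classical
  -- the restriction map
  let T : {x : C // x ≠ c₀ ∧ x ≠ c'} → ℝ := fun _ => 0
  let F : isbellV c₀ Y →ₗ[ℝ] ({x : C // x ≠ c₀ ∧ x ≠ c'} → ℝ) :=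
    { toFun := fun v => fun x => (v : (C → ℝ) × (C → ℝ)).1 x
      map_add' := fun a b => rfl
      map_smul' := fun r a => rfl }
  have hFinj : Function.Injective F := by
    rw [← LinearMap.ker_eq_bot, LinearMap.ker_eq_bot']
    rintro ⟨⟨u, v⟩, h0, hY⟩ hm
    have hz : ∀ y : {x : C // x ≠ c₀ ∧ x ≠ c'}, u y = 0 := fun y => congrFun hm y
    have hcc' : u c = u c' := by
      have h1 := hY _ hc; have h2 := hY _ hc'
      simp only at h1 h2; linarith
    have hu : ∀ a, u a = 0 := by
      intro a
      by_cases ha : a = c₀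
      · rw [ha]; exact h0
      · by_cases ha' : a = c'
        · rw [ha', ← hcc']
          by_cases hcc0 : c = c₀
          · rw [hcc0]; exact h0
          · exact hz ⟨c, hcc0, hne⟩
        · exact hz ⟨a, ha, ha'⟩
    have hv : ∀ b, v b = 0 := by
      intro b
      obtain ⟨a, ha⟩ := hcovD b
      have := hY _ ha
      simp only at this
      have := hu a
      linarith
    apply Subtype.ext
    exact Prod.ext (funext hu) (funext hv)
  have h1 : Module.finrank ℝ (isbellV c₀ Y) ≤
      Module.finrank ℝ ({x : C // x ≠ c₀ ∧ x ≠ c'} → ℝ) :=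
    LinearMap.finrank_le_finrank_of_injective hFinj
  have hcard : Fintype.card {x : C // x ≠ c₀ ∧ x ≠ c'} = Fintype.card C - 2 := by
    have e : {x : C // x ≠ c₀ ∧ x ≠ c'} ≃ {x : C // ¬(x = c₀ ∨ x = c')} :=
      Equiv.subtypeEquivRight (by tauto)
    rw [Fintype.card_congr e, Fintype.card_subtype_compl]
    congr 1
    rw [Fintype.card_subtype]
    have : (Finset.univ.filter (fun x => x = c₀ ∨ x = c')) = {c₀, c'} := by
      ext x; simp
    rw [this, Finset.card_insert_of_notMem (by simpa using hc'0.symm),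
      Finset.card_singleton]
  rw [Module.finrank_fintype_fun_eq_card, hcard] at h1
  have h2 : Module.finrank ℝ
      (Submodule.span ℝ
        {x : (C → ℝ) × (C → ℝ) |
          ∃ p ∈ isbellCell M c₀ Y, ∃ q ∈ isbellCell M c₀ Y, x = p - q})
      ≤ Module.finrank ℝ (isbellV c₀ Y) :=
    Submodule.finrank_mono (isbell_span_le M c₀ Y)
  have h3 : 1 < Fintype.card C := Fintype.one_lt_card_iff.mpr ⟨c, c', hne⟩
  omega

lemma isbell_caseA {C : Type*} [Fintype C] (M : C → C → ℝ) (c₀ : C) (Y : Set (C × C))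
    (hcovD : ∀ d : C, ∃ c : C, (c, d) ∈ Y)
    (hdim : Module.finrank ℝ
        (Submodule.span ℝ
          {x : (C → ℝ) × (C → ℝ) |
            ∃ p ∈ isbellCell M c₀ Y, ∃ q ∈ isbellCell M c₀ Y, x = p - q})
      = Fintype.card C - 1)
    {c c' d : C} (hc : (c, d) ∈ Y) (hc' : (c', d) ∈ Y) (hne : c ≠ c') : False := by
  by_cases h : c' = c₀
  · exact isbell_caseA' M c₀ Y hcovD hdim hc' hc hne.symm (fun hh => hne (hh.trans h.symm))
  · exact isbell_caseA' M c₀ Y hcovD hdim hc hc' hne h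

/-- Case B: two distinct second coordinates share a first coordinate. -/
lemma isbell_caseB' {C : Type*} [Fintype C] (M : C → C → ℝ) (c₀ : C) (Y : Set (C × C))
    (hcovC : ∀ c : C, ∃ d : C, (c, d) ∈ Y)
    (hdim : Module.finrank ℝ
        (Submodule.span ℝ
          {x : (C → ℝ) × (C → ℝ) |
            ∃ p ∈ isbellCell M c₀ Y, ∃ q ∈ isbellCell M c₀ Y, x = p - q})
      = Fintype.card C - 1)
    {c d d' d₀ : C} (hd0 : (c₀, d₀) ∈ Y)
    (hd : (c, d) ∈ Y) (hd' : (c, d') ∈ Y) (hne : d ≠ d')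
    (hd'0 : d' ≠ d₀) : False := by
  classical
  let F : isbellV c₀ Y →ₗ[ℝ] ({x : C // x ≠ d₀ ∧ x ≠ d'} → ℝ) :=
    { toFun := fun v => fun x => (v : (C → ℝ) × (C → ℝ)).2 x
      map_add' := fun a b => rfl
      map_smul' := fun r a => rfl }
  have hFinj : Function.Injective F := by
    rw [← LinearMap.ker_eq_bot, LinearMap.ker_eq_bot']
    rintro ⟨⟨u, v⟩, h0, hY⟩ hm
    have hz : ∀ y : {x : C // x ≠ d₀ ∧ x ≠ d'}, v y = 0 := fun y => congrFun hm y
    have hv0 : v d₀ = 0 := by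
      have h1 := hY _ hd0; simp only at h1; linarith
    have hdd' : v d = v d' := by
      have h1 := hY _ hd; have h2 := hY _ hd'
      simp only at h1 h2; linarith
    have hv : ∀ b, v b = 0 := by
      intro b
      by_cases hb : b = d₀
      · rw [hb]; exact hv0
      · by_cases hb' : b = d'
        · rw [hb', ← hdd']
          by_cases hdd0 : d = d₀
          · rw [hdd0]; exact hv0
          · exact hz ⟨d, hdd0, hne⟩
        · exact hz ⟨b, hb, hb'⟩
    have hu : ∀ a, u a = 0 := by
      intro a
      obtain ⟨b, hb⟩ := hcovC a
      have := hY _ hb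
      simp only at this
      have := hv b
      linarith
    apply Subtype.ext
    exact Prod.ext (funext hu) (funext hv)
  have h1 : Module.finrank ℝ (isbellV c₀ Y) ≤
      Module.finrank ℝ ({x : C // x ≠ d₀ ∧ x ≠ d'} → ℝ) :=
    LinearMap.finrank_le_finrank_of_injective hFinj
  have hcard : Fintype.card {x : C // x ≠ d₀ ∧ x ≠ d'} = Fintype.card C - 2 := by
    have e : {x : C // x ≠ d₀ ∧ x ≠ d'} ≃ {x : C // ¬(x = d₀ ∨ x = d')} :=
      Equiv.subtypeEquivRight (by tauto)
    rw [Fintype.card_congr e, Fintype.card_subtype_compl]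
    congr 1
    rw [Fintype.card_subtype]
    have : (Finset.univ.filter (fun x => x = d₀ ∨ x = d')) = {d₀, d'} := by
      ext x; simp
    rw [this, Finset.card_insert_of_notMem (by simpa using hd'0.symm),
      Finset.card_singleton]
  rw [Module.finrank_fintype_fun_eq_card, hcard] at h1
  have h2 : Module.finrank ℝ
      (Submodule.span ℝ
        {x : (C → ℝ) × (C → ℝ) |
          ∃ p ∈ isbellCell M c₀ Y, ∃ q ∈ isbellCell M c₀ Y, x = p - q})
      ≤ Module.finrank ℝ (isbellV c₀ Y) :=
    Submodule.finrank_mono (isbell_span_le M c₀ Y)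
  have h3 : 1 < Fintype.card C := Fintype.one_lt_card_iff.mpr ⟨d, d', hne⟩
  omega

lemma isbell_caseB {C : Type*} [Fintype C] (M : C → C → ℝ) (c₀ : C) (Y : Set (C × C))
    (hcovC : ∀ c : C, ∃ d : C, (c, d) ∈ Y)
    (hdim : Module.finrank ℝ
        (Submodule.span ℝ
          {x : (C → ℝ) × (C → ℝ) |
            ∃ p ∈ isbellCell M c₀ Y, ∃ q ∈ isbellCell M c₀ Y, x = p - q})
      = Fintype.card C - 1)
    {c d d' : C} (hd : (c, d) ∈ Y) (hd' : (c, d') ∈ Y) (hne : d ≠ d') : False := by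
  obtain ⟨d₀, hd0⟩ := hcovC c₀
  by_cases h : d' = d₀
  · exact isbell_caseB' M c₀ Y hcovC hdim hd0 hd' hd hne.symm
      (fun hh => hne (hh.trans h.symm))
  · exact isbell_caseB' M c₀ Y hcovC hdim hd0 hd hd' hne h

/-- Full-dimensional witness cells come from permutations: if `Y` covers both
coordinates and the span of differences of points of `Cell(Y)` has dimension
`card C - 1`, then `Y` is the graph of a permutation. -/
theorem fullDim_cell_is_permutation {C : Type*} [Fintype C] [Nonempty C]
    (M : C → C → ℝ) (c₀ : C) (Y : Set (C × C))
    (hcovC : ∀ c : C, ∃ d : C, (c, d) ∈ Y)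
    (hcovD : ∀ d : C, ∃ c : C, (c, d) ∈ Y)
    (hdim : Module.finrank ℝ
        (Submodule.span ℝ
          {x : (C → ℝ) × (C → ℝ) |
            ∃ p ∈ isbellCell M c₀ Y, ∃ q ∈ isbellCell M c₀ Y, x = p - q})
      = Fintype.card C - 1) :
    ∃ σ : Equiv.Perm C, Y = {q : C × C | σ q.1 = q.2} := by
  classical
  have uniq1 : ∀ c c' d, (c, d) ∈ Y → (c', d) ∈ Y → c = c' := by
    intro c c' d h h'
    by_contra hne
    exact isbell_caseA M c₀ Y hcovD hdim h h' hne
  have uniq2 : ∀ c d d', (c, d) ∈ Y → (c, d') ∈ Y → d = d' := by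
    intro c d d' h h'
    by_contra hne
    exact isbell_caseB M c₀ Y hcovC hdim h h' hne
  let f : C → C := fun c => (hcovC c).choose
  have hf : ∀ c, (c, f c) ∈ Y := fun c => (hcovC c).choose_spec
  have hinj : Function.Injective f := fun a b h =>
    uniq1 a b (f a) (hf a) (h ▸ hf b)
  refine ⟨Equiv.ofBijective f (Finite.injective_iff_bijective.mp hinj), ?_⟩
  ext ⟨c, d⟩
  simp only [Set.mem_setOf_eq, Equiv.ofBijective_apply]
  constructor
  · intro h; exact uniq2 c (f c) d (hf c) h
  · rintro rfl; exact hf c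
end

section
/- Admissible permutations solve the assignment problem: let C be a nonempty finite type, M : C → C → ℝ, and σ : C ≃ C a permutation. There exist f, g : C → ℝ with f(c) + g(d) ≤ M(c,d) for all (c,d) ∈ C × C and f(c) + g(σ(c)) = M(c,σ(c)) for all c ∈ C, if and only if σ minimizes the assignment cost: for every permutation τ : C ≃ C, ∑_{c ∈ C} M(c,σ(c)) ≤ ∑_{c ∈ C} M(c,τ(c)). -/
/-!
Summing `f c + g (τ c) ≤ M c (τ c)` over `c` bounds the cost of every `τ` below by `∑ f + ∑ g`,
which is the cost of `σ`. Conversely, after reindexing the columns by `σ` the optimal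
assignment is the identity, and the reduced costs `w c d = M c (σ d) - M c (σ c)` give every
cycle `c₀ → ⋯ → cₖ → c₀` a nonnegative weight, since that weight is the cost increase of the corresponding cyclic permutation. Without negative
cycles, shortest-path distances `g` along simple paths satisfy `g d ≤ g c + w c d`, and
`f c = M c (σ c) - g c` together with `g ∘ σ⁻¹` is the required dual pair.
-/

open List

section PathWeight

variable {C : Type*}

def pathWeight (w : C → C → ℝ) (p : List C) : ℝ := (zipWith w p p.tail).sum

theorem pathWeight_cons_cons (w : C → C → ℝ) (a b : C) (p : List C) :
    pathWeight w (a :: b :: p) = w a b + pathWeight w (b :: p) := by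
  simp [pathWeight]

theorem pathWeight_append_cons (w : C → C → ℝ) (l : List C) (d : C) (m : List C) :
    pathWeight w (l ++ d :: m) = pathWeight w (l ++ [d]) + pathWeight w (d :: m) := by
  induction l with
  | nil => simp [pathWeight]
  | cons a l ih =>
    cases l with
    | nil => simp [pathWeight]
    | cons b l =>
      simp only [cons_append, pathWeight_cons_cons] at ih ⊢
      rw [ih, add_assoc]

theorem pathWeight_concat (w : C → C → ℝ) (l : List C) (c d : C) :
    pathWeight w (l ++ [c, d]) = pathWeight w (l ++ [c]) + w c d := by
  rw [pathWeight_append_cons, pathWeight_cons_cons]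
  simp [pathWeight]

theorem sum_formPerm_eq_pathWeight [DecidableEq C] (w : C → C → ℝ) {a : C} {l : List C}
    (hl : (a :: l).Nodup) :
    ∑ x ∈ (a :: l).toFinset, w x ((a :: l).formPerm x) = pathWeight w (a :: l ++ [a]) := by
  set m := a :: l
  have hcyc : pathWeight w (m ++ [a]) = (zipWith w m (m.rotate 1)).sum := by
    simp only [pathWeight, m, rotate_cons_succ, rotate_zero,
      tail_append_of_ne_nil (cons_ne_nil a l), tail_cons]
    conv_lhs => rw [← append_nil (l ++ [a]), zipWith_append (by simp)]
    simp
  rw [hcyc, sum_toFinset _ hl, ← Fin.sum_univ_getElem, ← Fin.sum_univ_getElem]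
  refine Fintype.sum_equiv (finCongr (by simp)) _ _ fun i => ?_
  simp [formPerm_apply_getElem _ hl, getElem_rotate]

theorem exists_path_le_pathWeight_add {w : C → C → ℝ}
    (hcycle : ∀ a l, (a :: l).Nodup → 0 ≤ pathWeight w (a :: l ++ [a]))
    {p : List C} {c : C} (hp : (p ++ [c]).Nodup) (d : C) :
    ∃ q : List C, (q ++ [d]).Nodup ∧ pathWeight w (q ++ [d]) ≤ pathWeight w (p ++ [c]) + w c d := by
  by_cases hdc : d = c
  · subst hdc
    refine ⟨p, hp, le_add_of_nonneg_right ?_⟩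
    simpa [pathWeight] using hcycle d [] (nodup_singleton d)
  by_cases hdp : d ∈ p
  · -- cut the cycle `d → ⋯ → c → d` out of the extended path
    obtain ⟨l₁, l₂, rfl⟩ := append_of_mem hdp
    have hsplit : l₁ ++ d :: l₂ ++ [c] = l₁ ++ d :: (l₂ ++ [c]) := by simp
    rw [hsplit] at hp ⊢
    refine ⟨l₁, ?_, ?_⟩
    · exact hp.sublist (by simp)
    · have hcut := pathWeight_append_cons w l₁ d (l₂ ++ [c])
      have hclose := pathWeight_concat w (d :: l₂) c d
      have hnonneg := hcycle d (l₂ ++ [c]) hp.of_append_right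
      simp only [cons_append, append_assoc, nil_append] at hclose hnonneg
      linarith
  · refine ⟨p ++ [c], ?_, by simp [pathWeight_concat]⟩
    rw [nodup_append]
    refine ⟨hp, nodup_singleton d, ?_⟩
    simp only [mem_append, mem_singleton]
    rintro x hx _ rfl rfl
    tauto

theorem exists_shortest_path [Finite C] (w : C → C → ℝ) (d : C) :
    ∃ p : List C, (p ++ [d]).Nodup ∧
      ∀ q : List C, (q ++ [d]).Nodup → pathWeight w (p ++ [d]) ≤ pathWeight w (q ++ [d]) := by
  classical
  have := Fintype.ofFinite C
  have : Finite {q : List C // (q ++ [d]).Nodup} :=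
    Finite.of_injective (fun q => (⟨q.1 ++ [d], q.2⟩ : {l : List C // l.Nodup}))
      fun q q' h => Subtype.ext (append_cancel_right (congrArg Subtype.val h))
  have : Nonempty {q : List C // (q ++ [d]).Nodup} := ⟨⟨[], nodup_singleton d⟩⟩
  obtain ⟨⟨p, hp⟩, hmin⟩ := Finite.exists_min fun q : {q : List C // (q ++ [d]).Nodup} =>
    pathWeight w (q.1 ++ [d])
  exact ⟨p, hp, fun q hq => hmin ⟨q, hq⟩⟩

theorem exists_potential_of_cycle_nonneg [Finite C] {w : C → C → ℝ}
    (hcycle : ∀ a l, (a :: l).Nodup → 0 ≤ pathWeight w (a :: l ++ [a])) :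
    ∃ g : C → ℝ, ∀ c d, g d ≤ g c + w c d := by
  choose p hp hmin using exists_shortest_path w
  refine ⟨fun d => pathWeight w (p d ++ [d]), fun c d => ?_⟩
  obtain ⟨q, hq, hle⟩ := exists_path_le_pathWeight_add hcycle (hp c) d
  exact (hmin d q hq).trans hle

theorem cycle_nonneg_of_forall_perm [Fintype C] {N : C → C → ℝ}
    (hopt : ∀ τ : Equiv.Perm C, ∑ c, N c c ≤ ∑ c, N c (τ c)) (a : C) (l : List C)
    (hl : (a :: l).Nodup) : 0 ≤ pathWeight (fun c d => N c d - N c c) (a :: l ++ [a]) := by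
  classical
  rw [← sum_formPerm_eq_pathWeight _ hl,
    Finset.sum_subset (Finset.subset_univ _) fun x _ hx => by
      simp [formPerm_apply_of_notMem (l := a :: l) (by simpa using hx)],
    Finset.sum_sub_distrib, sub_nonneg]
  exact hopt _

end PathWeight

theorem admissible_iff_optimal_general {C : Type*} [Fintype C]
    (M : C → C → ℝ) (σ : Equiv.Perm C) :
    (∃ f g : C → ℝ, (∀ c d, f c + g d ≤ M c d) ∧ (∀ c, f c + g (σ c) = M c (σ c))) ↔
      ∀ τ : Equiv.Perm C, ∑ c, M c (σ c) ≤ ∑ c, M c (τ c) := by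
  constructor
  · rintro ⟨f, g, hle, heq⟩ τ
    calc ∑ c, M c (σ c) = ∑ c, (f c + g (σ c)) := by simp only [heq]
      _ = ∑ c, (f c + g (τ c)) := by
        rw [Finset.sum_add_distrib, Finset.sum_add_distrib, Equiv.sum_comp σ g, Equiv.sum_comp τ g]
      _ ≤ ∑ c, M c (τ c) := Finset.sum_le_sum fun c _ => hle c (τ c)
  · intro hopt
    have hopt' : ∀ τ : Equiv.Perm C, ∑ c, M c (σ c) ≤ ∑ c, M c (σ (τ c)) := fun τ => hopt (σ * τ)
    obtain ⟨g, hg⟩ := exists_potential_of_cycle_nonneg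
      (cycle_nonneg_of_forall_perm (N := fun c d => M c (σ d)) hopt')
    refine ⟨fun c => M c (σ c) - g c, fun d => g (σ.symm d), fun c d => ?_, fun c => by simp⟩
    have := hg c (σ.symm d)
    simp only [Equiv.apply_symm_apply] at this
    linarith

/-- Admissible permutations solve the assignment problem: the permutation
graph `Γ_σ` is admissible (its witness polyhedron is nonempty) iff `σ`
minimizes the assignment cost `∑ c, M c (σ c)`. -/
theorem admissible_iff_optimal {C : Type*} [Fintype C] [Nonempty C]
    (M : C → C → ℝ) (σ : Equiv.Perm C) :
    (∃ f g : C → ℝ, (∀ c d, f c + g d ≤ M c d) ∧ (∀ c, f c + g (σ c) = M c (σ c))) ↔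
      ∀ τ : Equiv.Perm C, ∑ c, M c (σ c) ≤ ∑ c, M c (τ c) :=
  admissible_iff_optimal_general M σ
end

section
/- Events Theorem (gap values are exact distances to event loci): let (f,g) be a nucleus point of M (g = M^* f and f = M_* g) and let (c₀,d₀) ∈ C × D, with gap value δ = M(c₀,d₀) − f(c₀) − g(d₀). Then δ is the least element of the set of distances from (f,g) to the event locus of (c₀,d₀): the set { r : ℝ | there exists a nucleus point (f',g') of M with f'(c₀) + g'(d₀) = M(c₀,d₀) and r = max( osc(f − f'), osc(g − g') ) } has δ as its minimum, i.e., δ belongs to this set and δ ≤ r for every r in this set. -/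
/-- Events Theorem (gap values are exact distances to event loci): the gap
value `δ = M c₀ d₀ - f c₀ - g d₀` at a nucleus point `(f,g)` is the least
element of the set of distances from `(f,g)` to nucleus points for which
`(c₀,d₀)` is a witness pair. -/
theorem events_theorem {C D : Type*} [Fintype C] [Nonempty C]
    [Fintype D] [Nonempty D] (M : C → D → ℝ) (f : C → ℝ) (g : D → ℝ)
    (hg : g = isbellStar M f) (hf : f = isbellLow M g) (c₀ : C) (d₀ : D) :
    IsLeast
      {r : ℝ | ∃ f' : C → ℝ, ∃ g' : D → ℝ,
        g' = isbellStar M f' ∧ f' = isbellLow M g' ∧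
        f' c₀ + g' d₀ = M c₀ d₀ ∧
        r = max (osc (fun c => f c - f' c)) (osc (fun d => g d - g' d))}
      (M c₀ d₀ - f c₀ - g d₀) := by
  have hfle : ∀ c d, f c ≤ M c d - g d := by
    intro c d
    rw [hf]
    exact Finset.inf'_le _ (Finset.mem_univ d)
  have hgle : ∀ c d, g d ≤ M c d - f c := by
    intro c d
    rw [hg]
    exact Finset.inf'_le _ (Finset.mem_univ c)
  set δ : ℝ := M c₀ d₀ - f c₀ - g d₀ with hδ
  have hδ0 : 0 ≤ δ := by have := hgle c₀ d₀; simp only [hδ]; linarith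
  constructor
  · -- membership: construct the perturbed nucleus point
    obtain ⟨d₁, -, hd₁⟩ :=
      Finset.exists_mem_eq_inf' Finset.univ_nonempty (fun d => M c₀ d - g d)
    have hd₁' : f c₀ = M c₀ d₁ - g d₁ := by rw [hf]; exact hd₁
    set g' : D → ℝ := fun d => min (g d) (M c₀ d - f c₀ - δ) with hg'def
    have hg'eq : ∀ d, g' d = min (g d) (M c₀ d - f c₀ - δ) := fun d => rfl
    set f' : C → ℝ := isbellLow M g' with hf'def
    have hg'le : ∀ d, g' d ≤ g d := fun d => min_le_left _ _
    have hg'le2 : ∀ d, g' d ≤ M c₀ d - f c₀ - δ := fun d => min_le_right _ _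
    have hg'ge : ∀ d, g d - δ ≤ g' d := by
      intro d
      refine le_min (by linarith) ?_
      have := hgle c₀ d; linarith
    have hg'd₀ : g' d₀ = g d₀ := by
      rw [hg'eq d₀]
      have h : M c₀ d₀ - f c₀ - δ = g d₀ := by simp only [hδ]; ring
      rw [h, min_self]
    have hf'le : ∀ c d, f' c ≤ M c d - g' d := by
      intro c d
      rw [hf'def]
      exact Finset.inf'_le _ (Finset.mem_univ d)
    have hf'ge : ∀ c, f c ≤ f' c := by
      intro c
      rw [hf'def]
      refine Finset.le_inf' _ _ (fun d _ => ?_)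
      have h1 := hfle c d; have h2 := hg'le d
      linarith
    have hf'c₀ge : f c₀ + δ ≤ f' c₀ := by
      rw [hf'def]
      refine Finset.le_inf' _ _ (fun d _ => ?_)
      have := hg'le2 d
      linarith
    have hf'c₀ : f' c₀ = f c₀ + δ := by
      have h1 := hf'le c₀ d₀
      rw [hg'd₀] at h1
      have h2 : M c₀ d₀ - g d₀ = f c₀ + δ := by simp only [hδ]; ring
      rw [h2] at h1
      linarith
    have hf'leδ : ∀ c, f' c ≤ f c + δ := by
      intro c
      obtain ⟨d₂, -, hd₂⟩ :=
        Finset.exists_mem_eq_inf' Finset.univ_nonempty (fun d => M c d - g d)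
      have hfc : f c = M c d₂ - g d₂ := by rw [hf]; exact hd₂
      have h1 := hf'le c d₂
      have h2 := hg'ge d₂
      linarith
    have hstar : g' = isbellStar M f' := by
      funext d
      refine le_antisymm ?_ ?_
      · refine Finset.le_inf' _ _ (fun c _ => ?_)
        have := hf'le c d
        linarith
      · rcases le_total (g d) (M c₀ d - f c₀ - δ) with h | h
        · -- g' d = g d
          obtain ⟨c₁, -, hc₁⟩ :=
            Finset.exists_mem_eq_inf' Finset.univ_nonempty (fun c => M c d - f c)
          have hgd : g d = M c₁ d - f c₁ := by rw [hg]; exact hc₁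
          have h1 : isbellStar M f' d ≤ M c₁ d - f' c₁ :=
            Finset.inf'_le _ (Finset.mem_univ c₁)
          have h2 := hf'ge c₁
          rw [hg'eq d, min_eq_left h]
          linarith
        · -- g' d = M c₀ d - f c₀ - δ
          have h1 : isbellStar M f' d ≤ M c₀ d - f' c₀ :=
            Finset.inf'_le _ (Finset.mem_univ c₀)
          rw [hg'eq d, min_eq_right h, ]
          rw [hf'c₀] at h1
          linarith
    have hwit : f' c₀ + g' d₀ = M c₀ d₀ := by
      rw [hf'c₀, hg'd₀]; simp only [hδ]; ring
    have hgd₁ : g d₁ - g' d₁ = δ := by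
      rw [hg'eq d₁]
      have h : M c₀ d₁ - f c₀ - δ = g d₁ - δ := by rw [hd₁']; ring
      rw [h, min_eq_right (by linarith)]
      ring
    have h1 : osc (fun c => f c - f' c) ≤ δ := by
      unfold osc
      have hs : Finset.univ.sup' Finset.univ_nonempty (fun c => f c - f' c) ≤ 0 :=
        Finset.sup'_le _ _ (fun c _ => by have := hf'ge c; linarith)
      have hi : (-δ) ≤ Finset.univ.inf' Finset.univ_nonempty (fun c => f c - f' c) :=
        Finset.le_inf' _ _ (fun c _ => by have := hf'leδ c; linarith)
      linarith
    have h2 : osc (fun d => g d - g' d) = δ := by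
      unfold osc
      have hs : Finset.univ.sup' Finset.univ_nonempty (fun d => g d - g' d) = δ := by
        refine le_antisymm (Finset.sup'_le _ _ (fun d _ => by have := hg'ge d; linarith)) ?_
        calc δ = g d₁ - g' d₁ := hgd₁.symm
          _ ≤ _ := Finset.le_sup' (fun d => g d - g' d) (Finset.mem_univ d₁)
      have hi : Finset.univ.inf' Finset.univ_nonempty (fun d => g d - g' d) = 0 := by
        refine le_antisymm ?_ (Finset.le_inf' _ _ (fun d _ => by have := hg'le d; linarith))
        calc Finset.univ.inf' Finset.univ_nonempty (fun d => g d - g' d)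
            ≤ g d₀ - g' d₀ := Finset.inf'_le _ (Finset.mem_univ d₀)
          _ = 0 := by rw [hg'd₀]; ring
      rw [hs, hi]; ring
    refine ⟨f', g', hstar, hf'def, hwit, ?_⟩
    rw [h2]
    exact (max_eq_right h1).symm
  · -- lower bound
    rintro r ⟨f', g', hg'star, hf'low, hw, rfl⟩
    have hf'le : ∀ c d, f' c ≤ M c d - g' d := by
      intro c d
      rw [hf'low]
      exact Finset.inf'_le _ (Finset.mem_univ d)
    have key : δ ≤ osc (fun d => g d - g' d) := by
      unfold osc
      have hId₀ : Finset.univ.inf' Finset.univ_nonempty (fun d => g d - g' d)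
          ≤ g d₀ - g' d₀ := Finset.inf'_le _ (Finset.mem_univ d₀)
      have hAc₀ : f' c₀ - f c₀ ≤
          Finset.univ.sup' Finset.univ_nonempty (fun d => g d - g' d) := by
        obtain ⟨d₂, -, hd₂⟩ :=
          Finset.exists_mem_eq_inf' Finset.univ_nonempty (fun d => M c₀ d - g d)
        have hfc : f c₀ = M c₀ d₂ - g d₂ := by rw [hf]; exact hd₂
        have ha := hf'le c₀ d₂
        have hb : g d₂ - g' d₂ ≤
            Finset.univ.sup' Finset.univ_nonempty (fun d => g d - g' d) :=
          Finset.le_sup' (fun d => g d - g' d) (Finset.mem_univ d₂)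
        linarith
      simp only [hδ]
      linarith
    exact key.trans (le_max_right _ _)
end
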